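/- arXiv:2605.07705 — 4 statements merged into one kernel-verified Lean document; each statement's English description precedes it below -/
import Mathlib

section
/- The logics GPTL⁻ and GPTL⁻_≥ have the same expressive power: every formula of GPTL⁻ is logically equivalent (over pointed two-sorted word-shaped graphs) to a formula of GPTL⁻_≥ and vice versa. -/
/-- A `Σ`-labelled two-sorted word-shaped graph: vertices `0, ..., n-1` in their
natural (successor) order, labelled by tokens in `A` except for a unique
`BOS` vertex (labelled `none`).  The prefix consists of the vertices before
`bos`, the suffix of the vertices from `bos` onwards. -/
structure TSGraph (A : Type) where
  n : ℕ
  lab : Fin n → Option A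
  bos : Fin n
  hbos : ∀ v, lab v = none ↔ v = bos

/-- Formulae of the logic `GPTL⁻`. -/
inductive GPTL (A : Type) : Type
  | bot : GPTL A
  | tok (p : A) : GPTL A
  | neg (φ : GPTL A) : GPTL A
  | and (φ ψ : GPTL A) : GPTL A
  | gpre (k : ℕ) (φ : GPTL A) : GPTL A
  | psuf (φ : GPTL A) : GPTL A

/-- Semantics of `GPTL⁻` at a vertex of a two-sorted word-shaped graph. -/
def Sat {A : Type} (G : TSGraph A) : Fin G.n → GPTL A → Prop
  | _, .bot => False
  | w, .tok p => G.lab w = some p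
  | w, .neg φ => ¬ Sat G w φ
  | w, .and φ ψ => Sat G w φ ∧ Sat G w ψ
  | _, .gpre k φ => k ≤ Nat.card {v : Fin G.n // v < G.bos ∧ Sat G v φ}
  | w, .psuf φ => ∃ v : Fin G.n, G.bos ≤ v ∧ v < w ∧ Sat G v φ

/-- Formulae of the logic `GPTL⁻_≥` (counted past modality). -/
inductive GPTLge (A : Type) : Type
  | bot : GPTLge A
  | tok (p : A) : GPTLge A
  | neg (φ : GPTLge A) : GPTLge A
  | and (φ ψ : GPTLge A) : GPTLge A
  | gpre (k : ℕ) (φ : GPTLge A) : GPTLge A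
  | psufGe (k : ℕ) (φ : GPTLge A) : GPTLge A

/-- Semantics of `GPTL⁻_≥` at a vertex of a two-sorted word-shaped graph. -/
def SatGe {A : Type} (G : TSGraph A) : Fin G.n → GPTLge A → Prop
  | _, .bot => False
  | w, .tok p => G.lab w = some p
  | w, .neg φ => ¬ SatGe G w φ
  | w, .and φ ψ => SatGe G w φ ∧ SatGe G w ψ
  | _, .gpre k φ => k ≤ Nat.card {v : Fin G.n // v < G.bos ∧ SatGe G v φ}
  | w, .psufGe k φ => k ≤ Nat.card {v : Fin G.n // G.bos ≤ v ∧ v < w ∧ SatGe G v φ}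

/-! `⟨P⟩^suf φ` is `⟨P⟩^suf_{≥1} φ`. Conversely, `⟨P⟩^suf_{≥k+1} φ` holds at `w` iff some suffix
vertex `v < w` satisfies `φ ∧ ⟨P⟩^suf_{≥k} φ` (take `v` the latest of the counted vertices), so
`⟨P⟩^suf_{≥k} φ` unfolds into `k` nested uncounted modalities. -/

theorem succ_le_card_Ico_sep_iff {α : Type*} [LinearOrder α] [Finite α] (P : α → Prop)
    (b w : α) (k : ℕ) :
    k + 1 ≤ Nat.card {v // b ≤ v ∧ v < w ∧ P v} ↔
      ∃ v, b ≤ v ∧ v < w ∧ P v ∧ k ≤ Nat.card {u // b ≤ u ∧ u < v ∧ P u} := by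
  set S := {v | b ≤ v ∧ v < w ∧ P v}
  change k + 1 ≤ S.ncard ↔ ∃ v, b ≤ v ∧ v < w ∧ P v ∧ k ≤ {u | b ≤ u ∧ u < v ∧ P u}.ncard
  constructor
  · intro hk
    obtain ⟨v, hv, hmax⟩ := S.exists_max_image id S.toFinite
      (Set.nonempty_of_ncard_ne_zero (by omega))
    have hsub : S \ {v} ⊆ {u | b ≤ u ∧ u < v ∧ P u} :=
      fun u ⟨hu, hne⟩ => ⟨hu.1, lt_of_le_of_ne (hmax u hu) hne, hu.2.2⟩
    have hremove := Set.ncard_sdiff_singleton_add_one hv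
    have hle := Set.ncard_le_ncard hsub
    exact ⟨v, hv.1, hv.2.1, hv.2.2, by omega⟩
  · rintro ⟨v, hbv, hvw, hv, hk⟩
    have hsub : insert v {u | b ≤ u ∧ u < v ∧ P u} ⊆ S := by
      rintro u (rfl | ⟨hbu, huv, hu⟩)
      exacts [⟨hbv, hvw, hv⟩, ⟨hbu, huv.trans hvw, hu⟩]
    have hle := Set.ncard_le_ncard hsub
    rw [Set.ncard_insert_of_notMem fun h => h.2.1.false] at hle
    omega

namespace GPTL

variable {A : Type}

def psufAtLeast : ℕ → GPTL A → GPTL A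
  | 0, _ => .neg .bot
  | k + 1, φ => .psuf (.and φ (psufAtLeast k φ))

def toGPTLge : GPTL A → GPTLge A
  | .bot => .bot
  | .tok p => .tok p
  | .neg φ => .neg φ.toGPTLge
  | .and φ ψ => .and φ.toGPTLge ψ.toGPTLge
  | .gpre k φ => .gpre k φ.toGPTLge
  | .psuf φ => .psufGe 1 φ.toGPTLge

theorem sat_psufAtLeast_iff (G : TSGraph A) (w : Fin G.n) (k : ℕ) (φ : GPTL A) :
    Sat G w (psufAtLeast k φ) ↔ k ≤ Nat.card {v // G.bos ≤ v ∧ v < w ∧ Sat G v φ} := by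
  induction k generalizing w with
  | zero => simp [psufAtLeast, Sat]
  | succ k ih =>
    simp only [psufAtLeast, Sat, ih, succ_le_card_Ico_sep_iff]

theorem sat_iff_satGe_toGPTLge (G : TSGraph A) (w : Fin G.n) (φ : GPTL A) :
    Sat G w φ ↔ SatGe G w φ.toGPTLge := by
  induction φ generalizing w with
  | psuf φ ih =>
    simp only [Sat, SatGe, toGPTLge]
    rw [Nat.one_le_iff_ne_zero, Nat.card_ne_zero, and_iff_left Subtype.finite,
      nonempty_subtype]
    simp only [ih]
  | _ => simp_all [Sat, SatGe, toGPTLge]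

end GPTL

namespace GPTLge

variable {A : Type}

def toGPTL : GPTLge A → GPTL A
  | .bot => .bot
  | .tok p => .tok p
  | .neg φ => .neg φ.toGPTL
  | .and φ ψ => .and φ.toGPTL ψ.toGPTL
  | .gpre k φ => .gpre k φ.toGPTL
  | .psufGe k φ => .psufAtLeast k φ.toGPTL

theorem satGe_iff_sat_toGPTL (G : TSGraph A) (w : Fin G.n) (ψ : GPTLge A) :
    SatGe G w ψ ↔ Sat G w ψ.toGPTL := by
  induction ψ generalizing w <;> simp_all [Sat, SatGe, toGPTL, GPTL.sat_psufAtLeast_iff]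

end GPTLge

/-- `GPTL⁻` and `GPTL⁻_≥` have the same expressive power: each formula of either
logic has a logically equivalent formula (same truth value at every pointed
two-sorted word-shaped graph) in the other. -/
theorem gptl_gptlge_same_expressive_power (A : Type) :
    (∀ φ : GPTL A, ∃ ψ : GPTLge A, ∀ (G : TSGraph A) (w : Fin G.n),
        Sat G w φ ↔ SatGe G w ψ) ∧
    (∀ ψ : GPTLge A, ∃ φ : GPTL A, ∀ (G : TSGraph A) (w : Fin G.n),
        SatGe G w ψ ↔ Sat G w φ) :=
  ⟨fun φ => ⟨φ.toGPTLge, fun G w => φ.sat_iff_satGe_toGPTLge G w⟩,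
    fun ψ => ⟨ψ.toGPTL, fun G w => ψ.satGe_iff_sat_toGPTL G w⟩⟩
end

section
/- Two pointed two-sorted word-shaped graphs satisfy the same GPTL⁻_≥-type of width k and modal depth d if and only if they are assigned the same state in every round up to d by every CPG-automaton whose multiset projections are capped at k. -/
def capFin (k m : ℕ) : Fin (k + 1) := ⟨min m k, Nat.lt_succ_of_le (Nat.min_le_right _ _)⟩

/-- Semantic data of a `GPTL⁻_≥`-type of width `k` and depth `d`: the label of the
point together with, for each type of the previous depth, the `k`-capped counts of
prefix vertices and of earlier suffix vertices realizing it. -/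
def TypeData (A : Type) (k : ℕ) : ℕ → Type
  | 0 => Option A
  | d + 1 => Option A × (TypeData A k d → Fin (k + 1)) × (TypeData A k d → Fin (k + 1))

def typeDataInst (A : Type) [Fintype A] [DecidableEq A] (k : ℕ) :
    ∀ d, Fintype (TypeData A k d) × DecidableEq (TypeData A k d)
  | 0 =>
    (inferInstanceAs (Fintype (Option A)), inferInstanceAs (DecidableEq (Option A)))
  | d + 1 =>
    letI := (typeDataInst A k d).1
    letI := (typeDataInst A k d).2
    (inferInstanceAs (Fintype (Option A × (TypeData A k d → Fin (k + 1)) × (TypeData A k d → Fin (k + 1)))),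
     inferInstanceAs (DecidableEq (Option A × (TypeData A k d → Fin (k + 1)) × (TypeData A k d → Fin (k + 1)))))

instance (A : Type) [Fintype A] [DecidableEq A] (k d : ℕ) : Fintype (TypeData A k d) :=
  (typeDataInst A k d).1

instance (A : Type) [Fintype A] [DecidableEq A] (k d : ℕ) : DecidableEq (TypeData A k d) :=
  (typeDataInst A k d).2

/-- The type data of depth `d` and width `k` of the pointed graph `(G, i)`. -/
noncomputable def typeData {A : Type} (k : ℕ) (G : TSGraph A) :
    (d : ℕ) → Fin G.n → TypeData A k d
  | 0, i => G.lab i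
  | d + 1, i =>
    (G.lab i,
     fun τ => capFin k (Nat.card {v : Fin G.n // v < G.bos ∧ typeData k G d v = τ}),
     fun τ => capFin k (Nat.card {v : Fin G.n // G.bos ≤ v ∧ v < i ∧ typeData k G d v = τ}))

def bigAnd {A : Type} : List (GPTLge A) → GPTLge A
  | [] => .neg .bot
  | φ :: l => .and φ (bigAnd l)

/-- The conjunction of the token of a vertex and the negations of all other tokens. -/
noncomputable def labelFormula {A : Type} [Fintype A] [DecidableEq A] (a : Option A) : GPTLge A :=
  bigAnd ((Finset.univ : Finset A).toList.map
    (fun q => if some q = a then GPTLge.tok q else GPTLge.neg (GPTLge.tok q)))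

/-- `⟨G⟩^pre_{=c} φ` for `c < k`, and `⟨G⟩^pre_{≥k} φ` when the cap `k` is reached. -/
def countFormulaG {A : Type} (k : ℕ) (c : Fin (k + 1)) (φ : GPTLge A) : GPTLge A :=
  if c.val = k then .gpre k φ
  else .and (.gpre c.val φ) (.neg (.gpre (c.val + 1) φ))

/-- `⟨P⟩^suf_{=c} φ` for `c < k`, and `⟨P⟩^suf_{≥k} φ` when the cap `k` is reached. -/
def countFormulaP {A : Type} (k : ℕ) (c : Fin (k + 1)) (φ : GPTLge A) : GPTLge A :=
  if c.val = k then .psufGe k φ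
  else .and (.psufGe c.val φ) (.neg (.psufGe (c.val + 1) φ))

/-- The `GPTL⁻_≥`-type formula of width `k` and depth `d` corresponding to type data. -/
noncomputable def typeFormula {A : Type} [Fintype A] [DecidableEq A] (k : ℕ) :
    (d : ℕ) → TypeData A k d → GPTLge A
  | 0, a => labelFormula a
  | d + 1, τ =>
    .and (labelFormula τ.1)
      (.and
        (bigAnd ((Finset.univ : Finset (TypeData A k d)).toList.map
          (fun σ => countFormulaG k (τ.2.1 σ) (typeFormula k d σ))))
        (bigAnd ((Finset.univ : Finset (TypeData A k d)).toList.map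
          (fun σ => countFormulaP k (τ.2.2 σ) (typeFormula k d σ)))))

/-- A counting past-global distributed automaton (`CPG`-automaton) over the
alphabet `A ∪ {BOS}`, with states in `{0,1}^m`, multiset counts capped at `k`,
output round `rounds`, and output length `b ≤ m`. -/
structure CPG (A : Type) (k m : ℕ) where
  init : Option A → (Fin m → Bool)
  trans : (Fin m → Bool) → ((Fin m → Bool) → Fin (k + 1)) →
    ((Fin m → Bool) → Fin (k + 1)) → (Fin m → Bool)
  rounds : ℕ
  b : ℕ
  hb : b ≤ m

/-- The state of vertex `v` of the two-sorted graph `G` after `t` rounds: each vertex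
updates based on its own state, the `k`-capped multiset of states of prefix vertices,
and the `k`-capped multiset of states of strictly earlier suffix vertices. -/
noncomputable def CPG.run {A : Type} {k m : ℕ} (Aut : CPG A k m) (G : TSGraph A) :
    ℕ → Fin G.n → (Fin m → Bool)
  | 0, v => Aut.init (G.lab v)
  | t + 1, v =>
    Aut.trans (Aut.run G t v)
      (fun q => capFin k (Nat.card {u : Fin G.n // u < G.bos ∧ Aut.run G t u = q}))
      (fun q => capFin k (Nat.card {u : Fin G.n // G.bos ≤ u ∧ u < v ∧ Aut.run G t u = q}))

/-!
The round-`t` state of a CPG-automaton at a vertex is a function of the vertex's depth-`t`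
type: the capped count of round-`t` states is obtained from the capped counts of depth-`t`
types by summing over the fibres of the map from types to states and capping again, and
capping the summands before the final cap changes nothing. For the converse, the type data
is itself computed by a CPG-automaton whose states are one-hot codes of pairs
(round `t ≤ d`, type of depth `t`).
-/

open Finset

section CappedCount

variable {α β γ : Type} (k : ℕ)

noncomputable def cappedCount (p : α → Prop) (f : α → β) (b : β) : Fin (k + 1) :=
  capFin k (Nat.card {a // p a ∧ f a = b})

def cappedPushforward [Fintype β] [DecidableEq γ] (g : β → γ) (c : β → Fin (k + 1))
    (x : γ) : Fin (k + 1) :=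
  capFin k (∑ b ∈ univ.filter (g · = x), (c b : ℕ))

lemma min_sum_min_eq_min_sum (s : Finset β) (c : β → ℕ) :
    min (∑ b ∈ s, min (c b) k) k = min (∑ b ∈ s, c b) k := by
  by_cases h : ∀ b ∈ s, c b ≤ k
  · rw [sum_congr rfl fun b hb => min_eq_left (h b hb)]
  · obtain ⟨b, hb, hkb⟩ := not_forall₂.mp h
    have hle : k ≤ ∑ b ∈ s, min (c b) k :=
      (min_eq_right (not_le.mp hkb).le).symm.trans_le
        (single_le_sum (f := fun b => min (c b) k) (fun _ _ => Nat.zero_le _) hb)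
    rw [min_eq_right hle, min_eq_right (hle.trans (sum_le_sum fun _ _ => min_le_left _ _))]

lemma card_comp_eq_sum_card [Finite α] [Fintype β] [DecidableEq γ] (p : α → Prop) (f : α → β)
    (g : β → γ) (x : γ) :
    Nat.card {a // p a ∧ g (f a) = x} =
      ∑ b ∈ univ.filter (g · = x), Nat.card {a // p a ∧ f a = b} := by
  classical
  have := Fintype.ofFinite α
  simp only [Nat.card_eq_fintype_card, Fintype.card_subtype]
  rw [card_eq_sum_card_fiberwise (f := f) (t := univ.filter (g · = x))
    (fun a ha => by simp_all)]
  refine sum_congr rfl fun b hb => congrArg card ?_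
  ext a
  simp only [mem_filter, mem_univ, true_and] at hb ⊢
  constructor
  · rintro ⟨⟨hp, -⟩, rfl⟩
    exact ⟨hp, rfl⟩
  · rintro ⟨hp, rfl⟩
    exact ⟨⟨hp, hb⟩, rfl⟩

lemma cappedCount_comp [Finite α] [Fintype β] [DecidableEq γ] (p : α → Prop) (f : α → β)
    (g : β → γ) : cappedCount k p (g ∘ f) = cappedPushforward k g (cappedCount k p f) := by
  funext x
  ext
  simp only [cappedCount, cappedPushforward, capFin, Function.comp_apply,
    card_comp_eq_sum_card, min_sum_min_eq_min_sum]

lemma cappedCount_comp_apply_of_injective (p : α → Prop) (f : α → β) {g : β → γ}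
    (hg : g.Injective) (b : β) : cappedCount k p (g ∘ f) (g b) = cappedCount k p f b := by
  simp only [cappedCount, Function.comp_apply, hg.eq_iff]

end CappedCount

section TypeData

variable {A : Type} {k : ℕ}

lemma typeData_succ (G : TSGraph A) (d : ℕ) (i : Fin G.n) :
    typeData k G (d + 1) i =
      (G.lab i, cappedCount k (· < G.bos) (typeData k G d),
        cappedCount k (fun v => G.bos ≤ v ∧ v < i) (typeData k G d)) := by
  rw [typeData]
  unfold cappedCount
  simp only [and_assoc]
  rfl

lemma CPG.run_succ {m : ℕ} (Aut : CPG A k m) (G : TSGraph A) (t : ℕ) (v : Fin G.n) :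
    Aut.run G (t + 1) v =
      Aut.trans (Aut.run G t v) (cappedCount k (· < G.bos) (Aut.run G t))
        (cappedCount k (fun u => G.bos ≤ u ∧ u < v) (Aut.run G t)) := by
  rw [CPG.run]
  unfold cappedCount
  simp only [and_assoc]

def TypeData.label : (t : ℕ) → TypeData A k t → Option A
  | 0, a => a
  | _ + 1, τ => τ.1

lemma TypeData.label_typeData (G : TSGraph A) (t : ℕ) (v : Fin G.n) :
    label t (typeData k G t v) = G.lab v := by
  cases t <;> rfl

variable [Fintype A] [DecidableEq A]

variable (k) in
noncomputable def TypeData.restrict : (d : ℕ) → TypeData A k (d + 1) → TypeData A k d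
  | 0, τ => τ.1
  | d + 1, τ =>
    (τ.1, cappedPushforward k (restrict d) τ.2.1, cappedPushforward k (restrict d) τ.2.2)

lemma TypeData.restrict_typeData (G : TSGraph A) (d : ℕ) (i : Fin G.n) :
    restrict k d (typeData k G (d + 1) i) = typeData k G d i := by
  induction d generalizing i with
  | zero => rfl
  | succ d ih =>
    have hcomp : restrict k d ∘ typeData k G (d + 1) = typeData k G d := funext ih
    rw [typeData_succ G (d + 1), typeData_succ G d]
    simp only [restrict]
    rw [← cappedCount_comp, ← cappedCount_comp, hcomp]

lemma typeData_eq_of_le {G H : TSGraph A} {i : Fin G.n} {j : Fin H.n} {t d : ℕ}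
    (h : typeData k G d i = typeData k H d j) (htd : t ≤ d) :
    typeData k G t i = typeData k H t j := by
  induction d, htd using Nat.le_induction with
  | base => exact h
  | succ d _ ih =>
    refine ih ?_
    rw [← TypeData.restrict_typeData G, ← TypeData.restrict_typeData H, h]

noncomputable def CPG.stateOfTypeData {m : ℕ} (Aut : CPG A k m) :
    (t : ℕ) → TypeData A k t → (Fin m → Bool)
  | 0, a => Aut.init a
  | t + 1, τ =>
    Aut.trans (Aut.stateOfTypeData t (TypeData.restrict k t τ))
      (cappedPushforward k (Aut.stateOfTypeData t) τ.2.1)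
      (cappedPushforward k (Aut.stateOfTypeData t) τ.2.2)

lemma CPG.run_eq_stateOfTypeData_comp {m : ℕ} (Aut : CPG A k m) (G : TSGraph A) (t : ℕ) :
    Aut.run G t = Aut.stateOfTypeData t ∘ typeData k G t := by
  induction t with
  | zero => rfl
  | succ t ih =>
    funext v
    rw [Aut.run_succ, ih, cappedCount_comp, cappedCount_comp, Function.comp_apply,
      Function.comp_apply, stateOfTypeData, TypeData.restrict_typeData, typeData_succ]

end TypeData

section TypeDataAutomaton

variable (A : Type) [Fintype A] [DecidableEq A] (k d : ℕ)

abbrev TypeDataUpTo : Type := (t : Fin (d + 1)) × TypeData A k t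

instance : Nonempty (TypeDataUpTo A k d) := ⟨⟨0, (none : Option A)⟩⟩

noncomputable def TypeDataUpTo.encode (s : TypeDataUpTo A k d) :
    Fin (Fintype.card (TypeDataUpTo A k d)) → Bool :=
  fun i => decide (Fintype.equivFin _ s = i)

variable {A k d}

lemma TypeDataUpTo.encode_injective : (encode A k d).Injective := fun s s' h => by
  simpa [encode] using congrFun h (Fintype.equivFin _ s')

noncomputable def TypeDataUpTo.step (s : TypeDataUpTo A k d)
    (cp cs : (Fin (Fintype.card (TypeDataUpTo A k d)) → Bool) → Fin (k + 1)) :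
    Fin (Fintype.card (TypeDataUpTo A k d)) → Bool :=
  if h : s.1.val < d then
    encode A k d ⟨⟨s.1 + 1, Nat.succ_lt_succ h⟩,
      (TypeData.label s.1 s.2, fun σ => cp (encode A k d ⟨s.1, σ⟩),
        fun σ => cs (encode A k d ⟨s.1, σ⟩))⟩
  else encode A k d s

variable (A k d) in
noncomputable def typeDataAutomaton : CPG A k (Fintype.card (TypeDataUpTo A k d)) where
  init a := TypeDataUpTo.encode A k d ⟨0, a⟩
  trans q := TypeDataUpTo.step (Function.invFun (TypeDataUpTo.encode A k d) q)
  rounds := d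
  b := 0
  hb := Nat.zero_le _

lemma typeDataAutomaton_trans_encode (s : TypeDataUpTo A k d) :
    (typeDataAutomaton A k d).trans (TypeDataUpTo.encode A k d s) = s.step :=
  congrArg TypeDataUpTo.step (Function.leftInverse_invFun TypeDataUpTo.encode_injective s)

lemma run_typeDataAutomaton (G : TSGraph A) (t : ℕ) (ht : t ≤ d) :
    (typeDataAutomaton A k d).run G t =
      TypeDataUpTo.encode A k d ∘ Sigma.mk ⟨t, Nat.lt_succ_of_le ht⟩ ∘ typeData k G t := by
  induction t with
  | zero => rfl
  | succ t ih =>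
    funext v
    have hinj : (TypeDataUpTo.encode A k d ∘ Sigma.mk ⟨t, by omega⟩).Injective :=
      TypeDataUpTo.encode_injective.comp sigma_mk_injective
    rw [CPG.run_succ, ih (by omega), Function.comp_apply, Function.comp_apply,
      typeDataAutomaton_trans_encode, TypeDataUpTo.step, dif_pos (show t < d by omega)]
    simp only [Function.comp_apply, TypeData.label_typeData, typeData_succ]
    congr
    all_goals funext σ; exact cappedCount_comp_apply_of_injective k _ _ hinj σ

end TypeDataAutomaton

/-- Two pointed two-sorted word-shaped graphs have the same `GPTL⁻_≥`-type of width
`k` and depth `d` iff every `CPG`-automaton with multiset counts capped at `k`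
assigns them the same state in every round up to `d`. -/
theorem same_type_iff_same_automaton_states {A : Type} [Fintype A] [DecidableEq A]
    (k d : ℕ) (G H : TSGraph A) (i : Fin G.n) (j : Fin H.n) :
    typeData k G d i = typeData k H d j ↔
      ∀ (m : ℕ) (Aut : CPG A k m) (t : ℕ), t ≤ d → Aut.run G t i = Aut.run H t j := by
  refine ⟨fun h m Aut t ht => ?_, fun h => ?_⟩
  · rw [Aut.run_eq_stateOfTypeData_comp, Aut.run_eq_stateOfTypeData_comp, Function.comp_apply,
      Function.comp_apply, typeData_eq_of_le h ht]
  · have hd := h _ (typeDataAutomaton A k d) d le_rfl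
    rw [run_typeDataAutomaton G d le_rfl, run_typeDataAutomaton H d le_rfl] at hd
    simp only [Function.comp_apply] at hd
    simpa using TypeDataUpTo.encode_injective hd
end

section
/- The transition relation of the GPTL⁻_≥-type automaton of width k is injective on reachable configurations: if two pointed graphs satisfy different types of width k and depth d, then they satisfy different types of width k and depth d+1. -/
/-! The depth-`d` type of a point can be read off its depth-`(d + 1)` type, so the transition
has a left inverse `projType`. The label is kept, and the `k`-capped number of prefix (resp.
earlier suffix) vertices of depth-`d` type `σ` is the `k`-capped sum, over the depth-`(d + 1)`
types `μ` refining `σ`, of the `k`-capped numbers of such vertices of type `μ`: the vertices of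
type `σ` are partitioned by their depth-`(d + 1)` type, and capping the summands of a sum does
not change its capped value. -/

theorem card_subtype_eq_sum_card_fiberwise {α β γ : Type*} [Fintype α] [Fintype β]
    [DecidableEq γ] (S : α → Prop) (f : α → β) (p : β → γ) (g : α → γ)
    (hg : ∀ a, p (f a) = g a) (c : γ) :
    Nat.card {a // S a ∧ g a = c} =
      ∑ b ∈ Finset.univ.filter (p · = c), Nat.card {a // S a ∧ f a = b} := by
  classical
  simp only [Nat.card_eq_fintype_card, Fintype.card_subtype]
  rw [Finset.card_eq_sum_card_fiberwise (f := f) (t := Finset.univ.filter (p · = c))]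
  · refine Finset.sum_congr rfl fun b hb => congrArg Finset.card ?_
    ext a
    simp only [Finset.mem_filter, Finset.mem_univ, true_and] at hb ⊢
    constructor
    · rintro ⟨⟨hS, -⟩, rfl⟩
      exact ⟨hS, rfl⟩
    · rintro ⟨hS, rfl⟩
      exact ⟨⟨hS, (hg a).symm.trans hb⟩, rfl⟩
  · intro a ha
    simp only [Finset.coe_filter, Finset.mem_univ, true_and, Set.mem_ofPred_eq] at ha ⊢
    rw [hg, ha.2]

theorem capFin_sum_capFin {ι : Type*} (k : ℕ) (s : Finset ι) (f : ι → ℕ) :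
    capFin k (∑ i ∈ s, (capFin k (f i)).val) = capFin k (∑ i ∈ s, f i) := by
  refine Fin.ext (?_ : min (∑ i ∈ s, min (f i) k) k = min (∑ i ∈ s, f i) k)
  by_cases hbig : ∃ i ∈ s, k ≤ f i
  · obtain ⟨i, hi, hki⟩ := hbig
    have hcapped : k ≤ ∑ i ∈ s, min (f i) k :=
      (min_eq_right hki).symm.le.trans
        (Finset.single_le_sum (f := fun i => min (f i) k) (fun _ _ => Nat.zero_le _) hi)
    have huncapped : k ≤ ∑ i ∈ s, f i :=
      hcapped.trans (Finset.sum_le_sum fun i _ => min_le_left _ _)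
    rw [min_eq_right hcapped, min_eq_right huncapped]
  · push Not at hbig
    rw [Finset.sum_congr rfl fun i hi => min_eq_left (hbig i hi).le]

theorem capFin_sum_capFin_card_fiberwise {α β γ : Type*} [Fintype α] [Fintype β]
    [DecidableEq γ] (k : ℕ) (S : α → Prop) (f : α → β) (p : β → γ) (g : α → γ)
    (hg : ∀ a, p (f a) = g a) (c : γ) :
    capFin k (∑ b ∈ Finset.univ.filter (p · = c),
        (capFin k (Nat.card {a // S a ∧ f a = b})).val) =
      capFin k (Nat.card {a // S a ∧ g a = c}) := by
  rw [capFin_sum_capFin, card_subtype_eq_sum_card_fiberwise S f p g hg]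

noncomputable def projType {A : Type} [Fintype A] [DecidableEq A] (k : ℕ) :
    (d : ℕ) → TypeData A k (d + 1) → TypeData A k d
  | 0, τ => τ.1
  | d + 1, τ =>
    (τ.1,
     fun σ => capFin k (∑ μ ∈ Finset.univ.filter (projType k d · = σ), (τ.2.1 μ).val),
     fun σ => capFin k (∑ μ ∈ Finset.univ.filter (projType k d · = σ), (τ.2.2 μ).val))

theorem projType_typeData {A : Type} [Fintype A] [DecidableEq A] (k : ℕ) (G : TSGraph A) :
    ∀ (d : ℕ) (i : Fin G.n), projType k d (typeData k G (d + 1) i) = typeData k G d i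
  | 0, _ => rfl
  | d + 1, i => by
    have ih := projType_typeData k G d
    refine Prod.ext rfl (Prod.ext (funext fun σ => ?_) (funext fun σ => ?_))
    · exact capFin_sum_capFin_card_fiberwise k _ _ _ _ ih σ
    · have suffix :=
        capFin_sum_capFin_card_fiberwise k (fun v => G.bos ≤ v ∧ v < i) _ _ _ ih σ
      simp only [and_assoc] at suffix
      exact suffix

/-- Injectivity of the type-automaton transition on reachable configurations: if two
pointed graphs satisfy different `GPTL⁻_≥`-types of width `k` and depth `d`, then
they satisfy different types of width `k` and depth `d + 1`. -/
theorem type_transition_injective {A : Type} [Fintype A] [DecidableEq A] (k d : ℕ)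
    (G H : TSGraph A) (i : Fin G.n) (j : Fin H.n)
    (h : typeData k G d i ≠ typeData k H d j) :
    typeData k G (d + 1) i ≠ typeData k H (d + 1) j := fun heq =>
  h (by rw [← projType_typeData k G d i, ← projType_typeData k H d j, heq])
end

section
/- Bounded-count determinacy: for multisets M, N over a finite set Q with equal k-caps, and for any subset S ⊆ Q, either both M and N assign S total count at least k, or they assign S exactly equal total counts; consequently, for any threshold ℓ ≤ k, the total count of S in M is at least ℓ iff the total count of S in N is at least ℓ. -/
/-- The `k`-projection of a multiset `M : S → ℕ`: multiplicities truncated at `k`. -/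
def kproj {S : Type} (M : S → ℕ) (k : ℕ) : S → ℕ := fun x => min (M x) k

section MinCap

variable {α : Type*} [LinearOrder α] {a b k : α}

theorem le_iff_le_of_min_eq_min (h : min a k = min b k) : k ≤ a ↔ k ≤ b := by
  rw [← min_eq_right_iff, h, min_eq_right_iff]

theorem eq_of_min_eq_min_of_lt (h : min a k = min b k) (ha : a < k) : a = b := by
  have hb : b < k := lt_of_not_ge fun hkb => ha.not_ge ((le_iff_le_of_min_eq_min h).2 hkb)
  rwa [min_eq_left ha.le, min_eq_left hb.le] at h

end MinCap

theorem le_sum_and_le_sum_or_sum_eq_of_kproj_eq {Q : Type} {k : ℕ} {M N : Q → ℕ}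
    (h : kproj M k = kproj N k) (S : Finset Q) :
    (k ≤ ∑ q ∈ S, M q ∧ k ≤ ∑ q ∈ S, N q) ∨ ∑ q ∈ S, M q = ∑ q ∈ S, N q := by
  have hq (q : Q) : min (M q) k = min (N q) k := congrFun h q
  by_cases hbig : ∃ q ∈ S, k ≤ M q
  · obtain ⟨q, hqS, hkM⟩ := hbig
    have hkN : k ≤ N q := (le_iff_le_of_min_eq_min (hq q)).1 hkM
    exact Or.inl ⟨hkM.trans (Finset.single_le_sum (fun _ _ => Nat.zero_le _) hqS),
      hkN.trans (Finset.single_le_sum (fun _ _ => Nat.zero_le _) hqS)⟩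
  · simp only [not_exists, not_and, not_le] at hbig
    exact Or.inr (Finset.sum_congr rfl fun q hqS => eq_of_min_eq_min_of_lt (hq q) (hbig q hqS))

theorem le_iff_le_of_le_and_le_or_eq {α : Type*} [Preorder α] {a b k ℓ : α} (hℓ : ℓ ≤ k)
    (h : (k ≤ a ∧ k ≤ b) ∨ a = b) : ℓ ≤ a ↔ ℓ ≤ b := by
  rcases h with ⟨hka, hkb⟩ | rfl
  · exact ⟨fun _ => hℓ.trans hkb, fun _ => hℓ.trans hka⟩
  · rfl

theorem bounded_count_determinacy_general {Q : Type} (k : ℕ) (M N : Q → ℕ)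
    (h : kproj M k = kproj N k) (S : Finset Q) :
    ((k ≤ ∑ q ∈ S, M q ∧ k ≤ ∑ q ∈ S, N q) ∨ (∑ q ∈ S, M q = ∑ q ∈ S, N q)) ∧
    (∀ ℓ : ℕ, ℓ ≤ k → (ℓ ≤ ∑ q ∈ S, M q ↔ ℓ ≤ ∑ q ∈ S, N q)) :=
  have hdich := le_sum_and_le_sum_or_sum_eq_of_kproj_eq h S
  ⟨hdich, fun _ hℓ => le_iff_le_of_le_and_le_or_eq hℓ hdich⟩

/-- Bounded-count determinacy: if two multisets over a finite set `Q` have equal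
`k`-caps, then for any `S ⊆ Q` either both assign `S` total count at least `k`, or
they assign `S` exactly equal total counts; consequently for every threshold
`ℓ ≤ k`, the total counts of `S` reach `ℓ` in `M` iff they do in `N`. -/
theorem bounded_count_determinacy {Q : Type} [Fintype Q] (k : ℕ) (M N : Q → ℕ)
    (h : kproj M k = kproj N k) (S : Finset Q) :
    ((k ≤ ∑ q ∈ S, M q ∧ k ≤ ∑ q ∈ S, N q) ∨ (∑ q ∈ S, M q = ∑ q ∈ S, N q)) ∧
    (∀ ℓ : ℕ, ℓ ≤ k → (ℓ ≤ ∑ q ∈ S, M q ↔ ℓ ≤ ∑ q ∈ S, N q)) :=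
  bounded_count_determinacy_general k M N h S
end
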